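/- Let Σ be a random element of 𝒦(ℍ) with a unique Fréchet mean Ξ ∈ 𝒦. If, with positive probability, Σ ≻ 0 and the optimal map T_Ξ^Σ exists as a bounded operator that is invertible with bounded inverse (in particular ‖T_Ξ^Σ h‖ ≥ c‖h‖ for all h and some c > 0), then Ξ ≻ 0. -/

import Mathlib

/-! The optimal map `T_Ξ^Σ` vanishes on `ker Ξ`, and the kernel of a non-negative operator is
the null set of its quadratic form. So as soon as one realisation of `T_Ξ^Σ` is bounded below,
`ker Ξ = 0`, i.e. `⟨Ξ h, h⟩ > 0` for every `h ≠ 0`. -/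

open MeasureTheory ProbabilityTheory Filter ContinuousLinearMap
open scoped RealInnerProductSpace NNReal ENNReal Topology

noncomputable section

namespace BuresWasserstein

variable (H : Type*) [NormedAddCommGroup H] [InnerProductSpace ℝ H] [CompleteSpace H]

/-- A fixed orthonormal (Hilbert) basis of `H`, used to define traces. -/
def basisIndex : Set H := (exists_hilbertBasis ℝ H).choose

/-- The fixed Hilbert basis of `H`. -/
def hbasis : HilbertBasis (basisIndex H) ℝ H := (exists_hilbertBasis ℝ H).choose_spec.choose

variable {H}

/-- The trace of a bounded operator, computed in the fixed basis
(junk value if the family is not summable). -/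
def trOp (F : H →L[ℝ] H) : ℝ := ∑' i : basisIndex H, ⟪F (hbasis H i), hbasis H i⟫

/-- The unique non-negative square root of a non-negative operator
(junk value `0` if no non-negative square root exists). -/
def sqrtOp (F : H →L[ℝ] H) : H →L[ℝ] H := by
  classical exact if h : ∃ S : H →L[ℝ] H, S.IsPositive ∧ S ∘L S = F then h.choose else 0

/-- The absolute value `|F| = (F*F)^{1/2}` of an operator. -/
def absOp (F : H →L[ℝ] H) : H →L[ℝ] H := sqrtOp ((ContinuousLinearMap.adjoint F) ∘L F)

/-- The trace norm `‖F‖₁ = tr |F|`. -/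
def traceNorm (F : H →L[ℝ] H) : ℝ := trOp (absOp F)

/-- The Hilbert--Schmidt norm `‖F‖₂ = (tr (F*F))^{1/2}`. -/
def hsNorm (F : H →L[ℝ] H) : ℝ := Real.sqrt (trOp ((ContinuousLinearMap.adjoint F) ∘L F))

/-- The Hilbert--Schmidt inner product `⟨F, G⟩₂ = tr (F*G)`. -/
def hsInner (F G : H →L[ℝ] H) : ℝ := trOp ((ContinuousLinearMap.adjoint F) ∘L G)

/-- `F` is a trace-class operator. -/
def IsTraceClass (F : H →L[ℝ] H) : Prop :=
  Summable (fun i : basisIndex H => ⟪absOp F (hbasis H i), hbasis H i⟫)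

/-- `F` is a Hilbert--Schmidt operator. -/
def IsHS (F : H →L[ℝ] H) : Prop :=
  Summable (fun i : basisIndex H => ⟪((ContinuousLinearMap.adjoint F) ∘L F) (hbasis H i), hbasis H i⟫)

/-- Membership in `𝒦(H)`: non-negative (self-adjoint) and trace class. -/
def MemK (F : H →L[ℝ] H) : Prop := F.IsPositive ∧ IsTraceClass F

/-- `F ≻ 0`: `F` is regular (strictly positive definite). -/
def PosDef (F : H →L[ℝ] H) : Prop := IsSelfAdjoint F ∧ ∀ h : H, h ≠ 0 → 0 < ⟪F h, h⟫

/-- Loewner partial order `F ⪯ G`. -/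
def Loewner (F G : H →L[ℝ] H) : Prop := (G - F).IsPositive

/-- The Bures--Wasserstein distance. -/
def BWdist (F G : H →L[ℝ] H) : ℝ :=
  Real.sqrt (trOp F + trOp G - 2 * trOp (sqrtOp (sqrtOp G ∘L F ∘L sqrtOp G)))

/-- `T` is (the bounded extension of) the optimal transport map `T_F^G`,
i.e. a non-negative operator with `F^{1/2} T F^{1/2} = (F^{1/2} G F^{1/2})^{1/2}`
and vanishing on the orthogonal complement of the range of `F`. -/
def IsOptMap (F G T : H →L[ℝ] H) : Prop :=
  T.IsPositive ∧ sqrtOp F ∘L T ∘L sqrtOp F = sqrtOp (sqrtOp F ∘L G ∘L sqrtOp F) ∧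
    ∀ h : H, (∀ x : H, ⟪F x, h⟫ = 0) → T h = 0

/-- The optimal transport map `T_F^G` (junk value `0` if it does not exist boundedly). -/
def optMap (F G : H →L[ℝ] H) : H →L[ℝ] H := by
  classical exact if h : ∃ T : H →L[ℝ] H, IsOptMap F G T then h.choose else 0

/-- The Borel σ-algebra generated by the Bures--Wasserstein distance. -/
def bwMS : MeasurableSpace (H →L[ℝ] H) :=
  MeasurableSpace.generateFrom {s | ∃ (G : H →L[ℝ] H) (r : ℝ), s = {F | BWdist F G < r}}

variable {Ω : Type*} [MeasurableSpace Ω]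

/-- Measurability with respect to the Bures--Wasserstein Borel σ-algebra. -/
def BWMeasurable (X : Ω → H →L[ℝ] H) : Prop := @Measurable _ _ _ bwMS X

/-- `X` is a random element of `(𝒦, Π)`. -/
def IsRandomK (P : Measure Ω) (X : Ω → H →L[ℝ] H) : Prop :=
  BWMeasurable X ∧ ∀ᵐ ω ∂P, MemK (X ω)

/-- The Fréchet functional `F ↦ 𝔼[Π(X, F)²]` (with values in `[0,∞]`). -/
def frechetFn (P : Measure Ω) (X : Ω → H →L[ℝ] H) (F : H →L[ℝ] H) : ℝ≥0∞ :=
  ∫⁻ ω, ENNReal.ofReal ((BWdist (X ω) F) ^ 2) ∂P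

/-- `Ξ` is a (population) Fréchet mean (barycentre) of `X`. -/
def IsFrechetMean (P : Measure Ω) (X : Ω → H →L[ℝ] H) (Ξ : H →L[ℝ] H) : Prop :=
  MemK Ξ ∧ frechetFn P X Ξ ≠ ⊤ ∧ ∀ F : H →L[ℝ] H, MemK F → frechetFn P X Ξ ≤ frechetFn P X F

/-- `Ξ` is an empirical Fréchet mean of `Sig 0, …, Sig (n-1)`. -/
def IsEmpFrechetMean (Sig : ℕ → H →L[ℝ] H) (n : ℕ) (Ξ : H →L[ℝ] H) : Prop :=
  MemK Ξ ∧ ∀ F : H →L[ℝ] H, MemK F →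
    ∑ i ∈ Finset.range n, (BWdist (Sig i) Ξ) ^ 2 ≤ ∑ i ∈ Finset.range n, (BWdist (Sig i) F) ^ 2

/-- `Sig` is a sequence of i.i.d. random elements of `(𝒦, Π)`. -/
def IsIIDSample (P : Measure Ω) (Sig : ℕ → Ω → H →L[ℝ] H) : Prop :=
  (∀ i, BWMeasurable (Sig i)) ∧
    ProbabilityTheory.iIndepFun (m := fun _ : ℕ => bwMS) Sig P ∧
    ∀ i j : ℕ, @ProbabilityTheory.IdentDistrib Ω Ω (H →L[ℝ] H) _ _ bwMS (Sig i) (Sig j) P P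

/-- Assumption A(1): `𝔼 ‖Σ‖₁ < ∞`. -/
def A1 (P : Measure Ω) (X : Ω → H →L[ℝ] H) : Prop :=
  ∫⁻ ω, ENNReal.ofReal (traceNorm (X ω)) ∂P ≠ ⊤

/-- Assumption A(2): `ℙ(Σ ≻ 0) > 0`. -/
def A2 (P : Measure Ω) (X : Ω → H →L[ℝ] H) : Prop := 0 < P {ω | PosDef (X ω)}

/-- Assumption B(1): the optimal maps `T_Ξ^Σ` exist boundedly a.s. and `𝔼 ‖T_Ξ^Σ‖_∞ < ∞`. -/
def B1 (P : Measure Ω) (X : Ω → H →L[ℝ] H) (Ξ : H →L[ℝ] H) : Prop :=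
  (∀ᵐ ω ∂P, ∃ T : H →L[ℝ] H, IsOptMap Ξ (X ω) T) ∧
    Integrable (fun ω => optMap Ξ (X ω)) P

/-- Assumption B(2): `ℙ(εR ⪯ Σ ⪯ ε⁻¹R) = 1` for some `R ∈ 𝒦` and `ε > 0`. -/
def B2 (P : Measure Ω) (X : Ω → H →L[ℝ] H) : Prop :=
  ∃ (R : H →L[ℝ] H) (ε : ℝ), MemK R ∧ 0 < ε ∧
    ∀ᵐ ω ∂P, Loewner (ε • R) (X ω) ∧ Loewner (X ω) (ε⁻¹ • R)

/-- The Borel σ-algebra generated by the Hilbert--Schmidt distance. -/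
def hsMS : MeasurableSpace (H →L[ℝ] H) :=
  MeasurableSpace.generateFrom {s | ∃ (G : H →L[ℝ] H) (r : ℝ), s = {F | hsNorm (F - G) < r}}

/-- The sequence of random operators `Xn` converges weakly (in distribution) to a centred
Gaussian random element of the Hilbert space `ℬ₂` of Hilbert--Schmidt operators: there is a
limiting probability measure, concentrated on the Hilbert--Schmidt operators, all of whose
one-dimensional projections are centred Gaussians, such that integrals of bounded,
`‖·‖₂`-continuous test functions converge. -/
def ConvWeakGaussianHS (P : Measure Ω) (Xn : ℕ → Ω → H →L[ℝ] H) : Prop :=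
  letI : MeasurableSpace (H →L[ℝ] H) := hsMS
  ∃ γ : Measure (H →L[ℝ] H), IsProbabilityMeasure γ ∧
    γ {B | IsHS B} = 1 ∧
    (∀ A : H →L[ℝ] H, IsHS A → ∃ v : ℝ≥0,
      γ.map (fun B => hsInner A B) = ProbabilityTheory.gaussianReal 0 v) ∧
    ∀ f : (H →L[ℝ] H) → ℝ,
      (∃ M : ℝ, ∀ B, |f B| ≤ M) →
      (∀ B : H →L[ℝ] H, ∀ ε : ℝ, 0 < ε → ∃ δ : ℝ, 0 < δ ∧
        ∀ B' : H →L[ℝ] H, hsNorm (B' - B) < δ → |f B' - f B| < ε) →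
      Tendsto (fun n => ∫ ω, f (Xn n ω) ∂P) atTop (𝓝 (∫ B, f B ∂γ))

/-- The empirical fixed-point functional `φₙ`. -/
def phiFix (n : ℕ) (Sig : ℕ → H →L[ℝ] H) (F : H →L[ℝ] H) : H →L[ℝ] H :=
  ((1 / (n : ℝ)) • ∑ j ∈ Finset.range n, sqrtOp (sqrtOp F ∘L Sig j ∘L sqrtOp F)) - F

section

variable {E : Type*} [NormedAddCommGroup E] [InnerProductSpace ℝ E]

theorem _root_.ContinuousLinearMap.IsPositive.apply_eq_zero_of_inner_self_eq_zero
    {T : E →L[ℝ] E} (hT : T.IsPositive) {h : E} (h0 : ⟪T h, h⟫ = 0) : T h = 0 := by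
  set a := ‖T h‖ ^ 2
  set b := ⟪T (T h), T h⟫
  have hb : 0 ≤ b := hT.inner_nonneg_left (T h)
  -- the quadratic form along the line `h - t • T h` is `b t² - 2 a t`, which dips below zero
  -- for small `t > 0` unless `a = 0`
  have hline (t : ℝ) : 0 ≤ t ^ 2 * b - 2 * t * a := by
    have hTTh : ⟪T (T h), h⟫ = a := by
      rw [hT.inner_left_eq_inner_right, real_inner_self_eq_norm_sq]
    have hTh : ⟪T h, T h⟫ = a := real_inner_self_eq_norm_sq _
    have := hT.inner_nonneg_left (h - t • T h)
    simp only [map_sub, map_smul, inner_sub_left, inner_sub_right, inner_smul_left,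
      inner_smul_right, RCLike.conj_to_real, hTTh, hTh, h0] at this
    linarith
  have ha : a = 0 := by
    have hmin := hline (a / (b + 1))
    have hb1 : 0 < b + 1 := by linarith
    rw [div_pow, ← sub_nonneg] at hmin
    field_simp at hmin
    nlinarith [sq_nonneg a, mul_nonneg (sq_nonneg a) hb]
  simpa [a] using ha

theorem IsOptMap.apply_eq_zero_of_apply_eq_zero {F G T : E →L[ℝ] E} (hT : IsOptMap F G T)
    (hF : F.IsPositive) {h : E} (hh : F h = 0) : T h = 0 :=
  hT.2.2 h fun x => by rw [hF.inner_left_eq_inner_right, hh, inner_zero_right]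

end

theorem posDef_of_isPositive_of_injective {F : H →L[ℝ] H} (hF : F.IsPositive)
    (hinj : ∀ h, F h = 0 → h = 0) : PosDef F := by
  refine ⟨hF.isSelfAdjoint, fun h hh => (hF.inner_nonneg_left h).lt_of_ne fun h0 => hh ?_⟩
  exact hinj h (hF.apply_eq_zero_of_inner_self_eq_zero h0.symm)

theorem statement14_general
    {H : Type*} [NormedAddCommGroup H] [InnerProductSpace ℝ H] [CompleteSpace H]
    {Ω : Type*} [MeasurableSpace Ω] (P : Measure Ω)
    (X : Ω → H →L[ℝ] H)
    (Xi : H →L[ℝ] H) (hXi : IsFrechetMean P X Xi)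
    (hpos : 0 < P {ω | PosDef (X ω) ∧ ∃ T : H →L[ℝ] H, IsOptMap Xi (X ω) T ∧
      Function.Surjective T ∧ ∃ c : ℝ, 0 < c ∧ ∀ h : H, c * ‖h‖ ≤ ‖T h‖}) :
    PosDef Xi := by
  obtain ⟨ω, -, T, hT, -, c, hc, hbelow⟩ := nonempty_of_measure_ne_zero hpos.ne'
  have hXiPos : Xi.IsPositive := hXi.1.1
  refine posDef_of_isPositive_of_injective hXiPos fun h hh => ?_
  have hle := hbelow h
  rw [hT.apply_eq_zero_of_apply_eq_zero hXiPos hh, norm_zero] at hle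
  exact norm_le_zero_iff.mp (nonpos_of_mul_nonpos_right hle hc)

/-- Lemma 5: if with positive probability `Σ ≻ 0` and the optimal map `T_Ξ^Σ` is invertible
with bounded inverse, then the Fréchet mean `Ξ` is regular. -/
theorem statement14
    {H : Type*} [NormedAddCommGroup H] [InnerProductSpace ℝ H] [CompleteSpace H]
    [TopologicalSpace.SeparableSpace H]
    {Ω : Type*} [MeasurableSpace Ω] (P : Measure Ω) [IsProbabilityMeasure P]
    (X : Ω → H →L[ℝ] H) (hX : IsRandomK P X)
    (Xi : H →L[ℝ] H) (hXi : IsFrechetMean P X Xi)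
    (huniq : ∀ Xi' : H →L[ℝ] H, IsFrechetMean P X Xi' → Xi' = Xi)
    (hpos : 0 < P {ω | PosDef (X ω) ∧ ∃ T : H →L[ℝ] H, IsOptMap Xi (X ω) T ∧
      Function.Surjective T ∧ ∃ c : ℝ, 0 < c ∧ ∀ h : H, c * ‖h‖ ≤ ‖T h‖}) :
    PosDef Xi :=
  statement14_general P X Xi hXi hpos

end BuresWasserstein
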